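/- arXiv:2101.10488 — 2 statements merged into one kernel-verified Lean document; each statement's English description precedes it below -/
import Mathlib

section
/- The reverse derivative combinator on polynomial tuples over Z₂ satisfies the chain rule direction of RD.5: for polynomial maps f : Z₂^a → Z₂^b and g : Z₂^b → Z₂^c given by tuples of polynomials, R[f;g](x, δ) = R[f](x, R[g](f(x), δ)), where R[h] for a polynomial map h : Z₂^m → Z₂^n is the map Z₂^m × Z₂^n → Z₂^m whose i-th component is Σⱼ (∂hⱼ/∂xᵢ)(x)·δⱼ. -/
open MvPolynomial

/-- The formal reverse derivative of a tuple of polynomials: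
R[h](x, δ)ᵢ = Σⱼ (∂hⱼ/∂xᵢ)(x)·δⱼ. -/
noncomputable def revDeriv {m n : ℕ} (h : Fin n → MvPolynomial (Fin m) (ZMod 2))
    (x : Fin m → ZMod 2) (δ : Fin n → ZMod 2) : Fin m → ZMod 2 :=
  fun i => ∑ j, eval x (pderiv i (h j)) * δ j

namespace MvPolynomial

variable {R σ τ : Type*} [CommSemiring R]

theorem eval_bind₁ (f : τ → MvPolynomial σ R) (x : σ → R) (p : MvPolynomial τ R) :
    eval x (bind₁ f p) = eval (fun j => eval x (f j)) p :=
  eval₂Hom_bind₁ _ _ _ _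

theorem pderiv_bind₁ [Fintype τ] (f : τ → MvPolynomial σ R) (i : σ) (p : MvPolynomial τ R) :
    pderiv i (bind₁ f p) = ∑ j, bind₁ f (pderiv j p) * pderiv i (f j) := by
  classical
  induction p using MvPolynomial.induction_on with
  | C r => simp
  | add p q hp hq => simp only [map_add, hp, hq, add_mul, Finset.sum_add_distrib]
  | mul_X p k hp =>
    have hX : ∑ j, bind₁ f (p * pderiv j (X k)) * pderiv i (f j) = bind₁ f p * pderiv i (f k) := by
      simp only [pderiv_X, Pi.single_apply, mul_ite, mul_one, mul_zero, apply_ite (bind₁ f),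
        map_zero, ite_mul, zero_mul, Finset.sum_ite_eq, Finset.mem_univ, if_true]
    calc pderiv i (bind₁ f (p * X k))
        = bind₁ f p * pderiv i (f k) + f k * pderiv i (bind₁ f p) := by
          rw [map_mul, bind₁_X_right, Derivation.leibniz, smul_eq_mul, smul_eq_mul, add_comm]
      _ = ∑ j, bind₁ f (p * pderiv j (X k)) * pderiv i (f j)
            + ∑ j, bind₁ f (X k * pderiv j p) * pderiv i (f j) := by
          rw [hX, hp, Finset.mul_sum]
          simp only [map_mul, bind₁_X_right, mul_assoc]
      _ = ∑ j, bind₁ f (pderiv j (p * X k)) * pderiv i (f j) := by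
          simp only [← Finset.sum_add_distrib, ← add_mul, ← map_add, Derivation.leibniz,
            smul_eq_mul]

end MvPolynomial

/-- Chain rule (RD.5) for the reverse derivative of polynomial maps over Z₂:
R[f;g](x, δ) = R[f](x, R[g](f(x), δ)). -/
theorem stmt_13 (a b c : ℕ)
    (f : Fin b → MvPolynomial (Fin a) (ZMod 2))
    (g : Fin c → MvPolynomial (Fin b) (ZMod 2))
    (x : Fin a → ZMod 2) (δ : Fin c → ZMod 2) :
    revDeriv (fun j => bind₁ f (g j)) x δ =
      revDeriv f x (revDeriv g (fun k => eval x (f k)) δ) := by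
  funext i
  simp only [revDeriv, pderiv_bind₁, map_sum, map_mul, eval_bind₁, Finset.sum_mul,
    Finset.mul_sum]
  rw [Finset.sum_comm]
  refine Finset.sum_congr rfl fun k _ => Finset.sum_congr rfl fun j _ => ?_
  ring
end

section
/- The brute-force reverse derivative of a boolean function requires exactly the stated evaluations and is correct on multilinear representatives: for f : Z₂^a → Z₂^b arising as evaluation of a tuple of multilinear polynomials p, the brute-force reverse derivative R_B[f](x, δ)ᵢ = Σⱼ (f(x)ⱼ + f(x + eᵢ)ⱼ)·δⱼ coincides with the formal reverse derivative R[p](x, δ)ᵢ = Σⱼ (∂pⱼ/∂xᵢ)(x)·δⱼ. -/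
/-! A polynomial of degree at most one in `X i` is affine along the `i`-th coordinate,
`q (x + c • eᵢ) = q x + c · ∂q/∂xᵢ (x)`, as one checks monomial by monomial. With `c = 1`
over `ZMod 2`, adding `q x` to both sides cancels it and leaves the partial derivative. -/

open MvPolynomial

namespace MvPolynomial

variable {R σ : Type*} [CommSemiring R] [DecidableEq σ]

theorem eval_add_single_monomial_of_apply_eq_zero {i : σ} {m : σ →₀ ℕ} (hm : m i = 0)
    (x : σ → R) (c r : R) :
    eval (x + Pi.single i c) (monomial m r) = eval x (monomial m r) := by
  rw [eval_monomial, eval_monomial]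
  congr 1
  refine Finsupp.prod_congr fun k hk => ?_
  have hki : k ≠ i := by
    rintro rfl
    exact Finsupp.mem_support_iff.mp hk hm
  simp [Pi.single_eq_of_ne hki]

theorem eval_add_single_monomial {i : σ} {m : σ →₀ ℕ} (hm : m i ≤ 1) (x : σ → R) (c r : R) :
    eval (x + Pi.single i c) (monomial m r) =
      eval x (monomial m r) + c * eval x (pderiv i (monomial m r)) := by
  interval_cases hmi : m i
  · simp [eval_add_single_monomial_of_apply_eq_zero hmi, pderiv_monomial, hmi]
  · set m' := m - Finsupp.single i 1
    have hm'i : m' i = 0 := by simp [m', hmi]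
    have hsplit : monomial m r = X i * monomial m' r := by
      rw [X, monomial_mul, one_mul, add_tsub_cancel_of_le (Finsupp.single_le_iff.mpr hmi.ge)]
    have hderiv : pderiv i (monomial m' r) = 0 := by simp [pderiv_monomial, hm'i]
    rw [hsplit, pderiv_mul, pderiv_X_self, hderiv, mul_zero, add_zero, one_mul, eval_mul,
      eval_mul, eval_add_single_monomial_of_apply_eq_zero hm'i]
    simp only [eval_X, Pi.add_apply, Pi.single_eq_same]
    ring

theorem eval_add_single {i : σ} {q : MvPolynomial σ R} (hq : ∀ m ∈ q.support, m i ≤ 1)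
    (x : σ → R) (c : R) :
    eval (x + Pi.single i c) q = eval x q + c * eval x (pderiv i q) := by
  conv_lhs => rw [q.as_sum]
  conv_rhs => rw [q.as_sum]
  simp only [map_sum, Finset.mul_sum, ← Finset.sum_add_distrib]
  exact Finset.sum_congr rfl fun m hm => eval_add_single_monomial (hq m hm) x c _

end MvPolynomial

/-- The brute-force reverse derivative coincides with the formal reverse derivative on
multilinear polynomial representatives:
Σⱼ (f(x)ⱼ + f(x + eᵢ)ⱼ)·δⱼ = Σⱼ (∂pⱼ/∂xᵢ)(x)·δⱼ. -/
theorem stmt_18 (a b : ℕ) (p : Fin b → MvPolynomial (Fin a) (ZMod 2))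
    (hp : ∀ j, ∀ m ∈ (p j).support, ∀ i, m i ≤ 1)
    (f : (Fin a → ZMod 2) → (Fin b → ZMod 2)) (hf : ∀ x j, f x j = eval x (p j))
    (x : Fin a → ZMod 2) (δ : Fin b → ZMod 2) (i : Fin a) :
    ∑ j, (f x j + f (x + Pi.single i 1) j) * δ j =
      ∑ j, eval x (pderiv i (p j)) * δ j := by
  refine Finset.sum_congr rfl fun j _ => ?_
  rw [hf, hf, eval_add_single (fun m hm => hp j m hm i), one_mul, ← add_assoc,
    CharTwo.add_self_eq_zero, zero_add]
end
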